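/- arXiv:2505.15415 — 3 statements merged into one kernel-verified Lean document; each statement's English description precedes it below -/
import Mathlib

section
/- Let (X, μ) be a finite measure space, n a positive integer, p a real number with p > 1, and f, s, h : X → ℝ bounded measurable functions. Then for every t₀ ∈ ℝ, the function t ↦ ∫_X e^{(n−p)·t·f(x)} · |s(x) − n·t·h(x)|^p dμ(x) is differentiable at t₀, with derivative ∫_X e^{(n−p)·t₀·f(x)} · [ (n−p)·f(x)·|s(x) − n·t₀·h(x)|^p − n·p·h(x)·(s(x) − n·t₀·h(x))·|s(x) − n·t₀·h(x)|^{p−2} ] dμ(x). -/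
/-!
The integrand is `Φ(t, f x, s x, h x)` for a function `Φ` of `(t, y) ∈ ℝ × ℝ³` whose
`t`-derivative `Φ'` is jointly continuous: the only delicate term, `y ↦ y |y|^{p-2}`, is up to
the factor `p` the derivative of `|y|^p`, which is `C¹` since `p > 1`. The data `(f, s, h)` take
values in a compact set `K`, so `Φ'` is bounded on `[t₀ - 1, t₀ + 1] × K`; a constant is
integrable for the finite measure `μ`, so differentiation under the integral sign applies.
-/

open MeasureTheory Real

theorem continuous_mul_abs_rpow_sub_two {p : ℝ} (hp : 1 < p) :
    Continuous fun y : ℝ => y * |y| ^ (p - 2) := by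
  have hderiv : deriv (fun y : ℝ => |y| ^ p) = fun y => p * (y * |y| ^ (p - 2)) := by
    ext y
    rw [(hasDerivAt_abs_rpow y hp).deriv]
    ring
  have hcont : Continuous fun y : ℝ => p * (y * |y| ^ (p - 2)) := by
    simpa only [norm_eq_abs, hderiv] using
      (contDiff_norm_rpow (E := ℝ) hp).continuous_deriv le_rfl
  simpa only [inv_mul_cancel_left₀ (by linarith : p ≠ 0)] using hcont.const_mul p⁻¹

theorem hasDerivAt_integral_comp_of_continuous {X Y : Type*} [MeasurableSpace X]
    [TopologicalSpace Y] [MeasurableSpace Y] [OpensMeasurableSpace Y]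
    {μ : Measure X} [IsFiniteMeasure μ] {g : X → Y} (hg : Measurable g)
    {K : Set Y} (hK : IsCompact K) (hgK : ∀ x, g x ∈ K)
    {Φ Φ' : ℝ → Y → ℝ} (hΦ : Continuous (Function.uncurry Φ))
    (hΦ' : Continuous (Function.uncurry Φ'))
    (hderiv : ∀ t y, HasDerivAt (Φ · y) (Φ' t y) t) (t₀ : ℝ) :
    HasDerivAt (fun t => ∫ x, Φ t (g x) ∂μ) (∫ x, Φ' t₀ (g x) ∂μ) t₀ := by
  have hS : IsCompact (Metric.closedBall t₀ 1 ×ˢ K) := (isCompact_closedBall t₀ 1).prod hK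
  obtain ⟨B, hB⟩ := hS.exists_bound_of_continuousOn hΦ.continuousOn
  obtain ⟨B', hB'⟩ := hS.exists_bound_of_continuousOn hΦ'.continuousOn
  have hmeas : ∀ {Ψ : ℝ → Y → ℝ}, Continuous (Function.uncurry Ψ) → ∀ t,
      AEStronglyMeasurable (fun x => Ψ t (g x)) μ := fun hΨ t =>
    ((hΨ.comp (Continuous.prodMk_right t)).measurable.comp hg).aestronglyMeasurable
  have hball : ∀ t ∈ Metric.ball t₀ 1, ∀ x, (t, g x) ∈ Metric.closedBall t₀ 1 ×ˢ K :=
    fun t ht x => ⟨Metric.ball_subset_closedBall ht, hgK x⟩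
  refine (hasDerivAt_integral_of_dominated_loc_of_deriv_le (F' := fun t x => Φ' t (g x))
    (bound := fun _ => B')
    (Metric.ball_mem_nhds t₀ one_pos) (.of_forall (hmeas hΦ))
    (.of_bound (hmeas hΦ t₀) B ?_) (hmeas hΦ' t₀) ?_ (integrable_const B') ?_).2
  · exact .of_forall fun x => hB _ (hball t₀ (Metric.mem_ball_self one_pos) x)
  · exact .of_forall fun x t ht => hB' _ (hball t ht x)
  · exact .of_forall fun x t _ => hderiv t (g x)

/-- The integrand of the numerator of `C_p(e^{t f} ω)`, as a function of the values
`y = (f x, s x, h x)` of the conformal factor, the scalar curvature and `□ f`. -/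
noncomputable def calabiDensity (n p t : ℝ) (y : ℝ × ℝ × ℝ) : ℝ :=
  exp ((n - p) * t * y.1) * |y.2.1 - n * t * y.2.2| ^ p

noncomputable def calabiDensityDeriv (n p t : ℝ) (y : ℝ × ℝ × ℝ) : ℝ :=
  exp ((n - p) * t * y.1) *
    ((n - p) * y.1 * |y.2.1 - n * t * y.2.2| ^ p
      - n * p * y.2.2 * ((y.2.1 - n * t * y.2.2) * |y.2.1 - n * t * y.2.2| ^ (p - 2)))

section
variable {n p : ℝ}

theorem continuous_calabiDensity (hp : 1 < p) :
    Continuous (Function.uncurry (calabiDensity n p)) := by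
  have hp0 : 0 ≤ p := by linarith
  unfold calabiDensity
  fun_prop (discharger := assumption)

theorem continuous_calabiDensityDeriv (hp : 1 < p) :
    Continuous (Function.uncurry (calabiDensityDeriv n p)) := by
  have hp0 : 0 ≤ p := by linarith
  have hu : Continuous fun q : ℝ × ℝ × ℝ × ℝ => q.2.2.1 - n * q.1 * q.2.2.2 := by fun_prop
  have := (continuous_mul_abs_rpow_sub_two hp).comp hu
  unfold calabiDensityDeriv
  fun_prop (discharger := assumption)

theorem hasDerivAt_calabiDensity (hp : 1 < p) (t : ℝ) (y : ℝ × ℝ × ℝ) :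
    HasDerivAt (calabiDensity n p · y) (calabiDensityDeriv n p t y) t := by
  have hexp : HasDerivAt (fun t => exp ((n - p) * t * y.1))
      (exp ((n - p) * t * y.1) * ((n - p) * y.1)) t := by
    simpa [mul_assoc] using ((hasDerivAt_mul_const y.1).const_mul (n - p)).exp
  have hlin : HasDerivAt (fun t => y.2.1 - n * t * y.2.2) (-(n * y.2.2)) t := by
    simpa [mul_assoc] using ((hasDerivAt_mul_const y.2.2).const_mul n).const_sub y.2.1
  refine (hexp.mul ((hasDerivAt_abs_rpow _ hp).comp t hlin)).congr_deriv ?_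
  simp only [calabiDensityDeriv, Function.comp_apply]
  ring

end

theorem stmt0_general {X : Type*} [MeasurableSpace X] (μ : Measure X) [IsFiniteMeasure μ]
    (n : ℕ) (p : ℝ) (hp : 1 < p)
    (f s h : X → ℝ) (hf : Measurable f) (hs : Measurable s) (hh : Measurable h)
    (C : ℝ) (hfb : ∀ x, |f x| ≤ C) (hsb : ∀ x, |s x| ≤ C) (hhb : ∀ x, |h x| ≤ C)
    (t₀ : ℝ) :
    HasDerivAt
      (fun t : ℝ => ∫ x, Real.exp (((n : ℝ) - p) * t * f x) * |s x - (n : ℝ) * t * h x| ^ p ∂μ)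
      (∫ x, Real.exp (((n : ℝ) - p) * t₀ * f x) *
          (((n : ℝ) - p) * f x * |s x - (n : ℝ) * t₀ * h x| ^ p
            - (n : ℝ) * p * h x *
              ((s x - (n : ℝ) * t₀ * h x) * |s x - (n : ℝ) * t₀ * h x| ^ (p - 2))) ∂μ)
      t₀ := by
  have hbounded : ∀ x, (f x, s x, h x) ∈ Metric.closedBall 0 C := fun x => by
    simp only [mem_closedBall_zero_iff, norm_prod_le_iff, norm_eq_abs]
    exact ⟨hfb x, hsb x, hhb x⟩
  exact hasDerivAt_integral_comp_of_continuous (hf.prodMk (hs.prodMk hh))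
    (isCompact_closedBall 0 C) hbounded (continuous_calabiDensity hp)
    (continuous_calabiDensityDeriv hp) (hasDerivAt_calabiDensity hp) t₀

/-- differentiability of the numerator of the p-Calabi functional
along a conformal ray. -/
theorem stmt0 {X : Type*} [MeasurableSpace X] (μ : Measure X) [IsFiniteMeasure μ]
    (n : ℕ) (hn : 0 < n) (p : ℝ) (hp : 1 < p)
    (f s h : X → ℝ) (hf : Measurable f) (hs : Measurable s) (hh : Measurable h)
    (C : ℝ) (hfb : ∀ x, |f x| ≤ C) (hsb : ∀ x, |s x| ≤ C) (hhb : ∀ x, |h x| ≤ C)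
    (t₀ : ℝ) :
    HasDerivAt
      (fun t : ℝ => ∫ x, Real.exp (((n : ℝ) - p) * t * f x) * |s x - (n : ℝ) * t * h x| ^ p ∂μ)
      (∫ x, Real.exp (((n : ℝ) - p) * t₀ * f x) *
          (((n : ℝ) - p) * f x * |s x - (n : ℝ) * t₀ * h x| ^ p
            - (n : ℝ) * p * h x *
              ((s x - (n : ℝ) * t₀ * h x) * |s x - (n : ℝ) * t₀ * h x| ^ (p - 2))) ∂μ)
      t₀ :=
  stmt0_general μ n p hp f s h hf hs hh C hfb hsb hhb t₀
end

section
/- Let (X, μ) be a finite nonzero measure space, n a positive integer, p a real number with p > 1, and f, s, h : X → ℝ bounded measurable functions. Define C(t) = ( ∫_X e^{(n−p)·t·f}·|s − n·t·h|^p dμ ) · ( ∫_X e^{n·t·f} dμ )^{−(n−p)/n}. Then C is differentiable at 0 with C′(0) = ( ∫_X F dμ ) · ( μ(X) )^{−(n−p)/n}, where F = (n−p)·f·( |s|^p − (1/μ(X))·∫_X |s|^p dμ ) − n·p·h·s·|s|^{p−2}. -/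
/-!
Both factors of the functional are integrals of functions of `(t, f x, s x, h x)` whose
`t`-derivative is jointly continuous (for `|y| ^ p` this is where `p > 1` enters). As `f, s, h`
take values in a compact box and `μ` is finite, these derivatives are uniformly bounded near
`t = 0`, so one may differentiate under the integral sign; the formula then follows from the
product and chain rules and `∫ e⁰ dμ = μ(X)`.
-/

open MeasureTheory Real Metric

theorem continuous_mul_abs_rpow_sub_two_mul {p : ℝ} (hp : 1 < p) :
    Continuous fun y : ℝ => p * |y| ^ (p - 2) * y := by
  have hderiv : deriv (fun y : ℝ => ‖y‖ ^ p) = fun y => p * |y| ^ (p - 2) * y := by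
    funext y
    rw [(hasDerivAt_norm_rpow y hp).deriv, norm_eq_abs]
  simpa only [hderiv] using (contDiff_norm_rpow (E := ℝ) hp).continuous_deriv le_rfl

section CompactRange

variable {X E : Type*} [MeasurableSpace X] {μ : Measure X} [IsFiniteMeasure μ]
  [TopologicalSpace E] [MeasurableSpace E] [OpensMeasurableSpace E]
  {g : X → E} {K : Set E}

theorem integrable_comp_of_forall_mem_isCompact {φ : E → ℝ} (hφ : Continuous φ)
    (hg : Measurable g) (hK : IsCompact K) (hgK : ∀ x, g x ∈ K) :
    Integrable (fun x => φ (g x)) μ := by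
  obtain ⟨B, hB⟩ := hK.exists_bound_of_continuousOn hφ.continuousOn
  exact .of_bound (hφ.measurable.comp hg).aestronglyMeasurable B
    (ae_of_all _ fun x => hB _ (hgK x))

theorem hasDerivAt_integral_comp_of_forall_mem_isCompact {Φ Φ' : ℝ → E → ℝ}
    (hΦ : ∀ t, Continuous (Φ t)) (hΦ' : Continuous (Function.uncurry Φ'))
    (hderiv : ∀ t y, HasDerivAt (Φ · y) (Φ' t y) t)
    (hg : Measurable g) (hK : IsCompact K) (hgK : ∀ x, g x ∈ K) (t₀ : ℝ) :
    Integrable (fun x => Φ' t₀ (g x)) μ ∧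
      HasDerivAt (fun t => ∫ x, Φ t (g x) ∂μ) (∫ x, Φ' t₀ (g x) ∂μ) t₀ := by
  obtain ⟨B, hB⟩ :=
    ((isCompact_closedBall t₀ 1).prod hK).exists_bound_of_continuousOn hΦ'.continuousOn
  exact hasDerivAt_integral_of_dominated_loc_of_deriv_le (bound := fun _ => B)
    (ball_mem_nhds t₀ one_pos)
    (.of_forall fun t => ((hΦ t).measurable.comp hg).aestronglyMeasurable)
    (integrable_comp_of_forall_mem_isCompact (g := g) (hΦ t₀) hg hK hgK)
    ((hΦ'.comp (Continuous.prodMk_right t₀)).measurable.comp hg).aestronglyMeasurable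
    (ae_of_all _ fun x t ht => hB (t, g x) ⟨ball_subset_closedBall ht, hgK x⟩)
    (integrable_const B) (ae_of_all _ fun x t _ => hderiv t (g x))

end CompactRange

section BoundedFunctions

variable {X : Type*} [MeasurableSpace X] {μ : Measure X} [IsFiniteMeasure μ]
  {f s h : X → ℝ} {C : ℝ}

theorem hasDerivAt_integral_exp_mul (a : ℝ) (hf : Measurable f) (hfb : ∀ x, |f x| ≤ C) :
    HasDerivAt (fun t => ∫ x, exp (a * t * f x) ∂μ) (a * ∫ x, f x ∂μ) 0 := by
  have hderiv (t y : ℝ) :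
      HasDerivAt (fun t => exp (a * t * y)) (exp (a * t * y) * (a * y)) t := by
    simpa using (((hasDerivAt_id t).const_mul a).mul_const y).exp
  have := (hasDerivAt_integral_comp_of_forall_mem_isCompact (μ := μ) (fun t => by fun_prop)
    (by fun_prop) hderiv hf isCompact_Icc (fun x => abs_le.mp (hfb x)) 0).2
  simpa [integral_const_mul] using this

theorem hasDerivAt_integral_exp_mul_abs_sub_rpow (a b : ℝ) {p : ℝ} (hp : 1 < p)
    (hf : Measurable f) (hs : Measurable s) (hh : Measurable h)
    (hfb : ∀ x, |f x| ≤ C) (hsb : ∀ x, |s x| ≤ C) (hhb : ∀ x, |h x| ≤ C) :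
    Integrable (fun x => a * f x * |s x| ^ p - b * p * h x * (s x * |s x| ^ (p - 2))) μ ∧
      HasDerivAt (fun t => ∫ x, exp (a * t * f x) * |s x - b * t * h x| ^ p ∂μ)
        (∫ x, a * f x * |s x| ^ p - b * p * h x * (s x * |s x| ^ (p - 2)) ∂μ) 0 := by
  have hderiv (t : ℝ) (y : ℝ × ℝ × ℝ) :
      HasDerivAt (fun t => exp (a * t * y.1) * |y.2.1 - b * t * y.2.2| ^ p)
        (exp (a * t * y.1) * (a * y.1) * |y.2.1 - b * t * y.2.2| ^ p + exp (a * t * y.1) *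
          (p * |y.2.1 - b * t * y.2.2| ^ (p - 2) * (y.2.1 - b * t * y.2.2) * -(b * y.2.2))) t := by
    have hexp : HasDerivAt (fun t => exp (a * t * y.1)) (exp (a * t * y.1) * (a * y.1)) t := by
      simpa using (((hasDerivAt_id t).const_mul a).mul_const y.1).exp
    have hlin : HasDerivAt (fun t => y.2.1 - b * t * y.2.2) (-(b * y.2.2)) t := by
      simpa using (((hasDerivAt_id t).const_mul b).mul_const y.2.2).const_sub y.2.1
    exact hexp.fun_mul ((hasDerivAt_abs_rpow _ hp).comp t hlin)
  have hp0 : 0 ≤ p := zero_le_one.trans hp.le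
  -- taken from the context by `fun_prop`, as `|u| ^ (p - 2)` alone is discontinuous at `u = 0`
  have hu : Continuous fun q : ℝ × ℝ × ℝ × ℝ =>
      p * |q.2.2.1 - b * q.1 * q.2.2.2| ^ (p - 2) * (q.2.2.1 - b * q.1 * q.2.2.2) :=
    (continuous_mul_abs_rpow_sub_two_mul hp).comp (by fun_prop)
  have := hasDerivAt_integral_comp_of_forall_mem_isCompact (μ := μ)
    (g := fun x => (f x, s x, h x))
    (fun t => by fun_prop (disch := intros; exact Or.inr hp0))
    (by fun_prop (disch := intros; exact Or.inr hp0)) hderiv (hf.prodMk (hs.prodMk hh))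
    (isCompact_Icc.prod (isCompact_Icc.prod isCompact_Icc))
    (fun x => ⟨abs_le.mp (hfb x), abs_le.mp (hsb x), abs_le.mp (hhb x)⟩) 0
  simp only [mul_zero, zero_mul, exp_zero, one_mul, sub_zero] at this
  convert this using 4 with x <;> ring

end BoundedFunctions

/-- first variation of the p-Calabi functional at the base metric:
`C′(0) = (∫ F dμ) · μ(X)^{-(n-p)/n}` with
`F = (n-p)·f·(|s|^p − ⨍|s|^p) − n·p·h·s·|s|^{p-2}`. -/
theorem stmt3 {X : Type*} [MeasurableSpace X] (μ : Measure X) [IsFiniteMeasure μ]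
    (hμ : μ Set.univ ≠ 0)
    (n : ℕ) (hn : 0 < n) (p : ℝ) (hp : 1 < p)
    (f s h : X → ℝ) (hf : Measurable f) (hs : Measurable s) (hh : Measurable h)
    (C : ℝ) (hfb : ∀ x, |f x| ≤ C) (hsb : ∀ x, |s x| ≤ C) (hhb : ∀ x, |h x| ≤ C) :
    HasDerivAt
      (fun t : ℝ =>
        (∫ x, Real.exp (((n : ℝ) - p) * t * f x) * |s x - (n : ℝ) * t * h x| ^ p ∂μ) *
          (∫ x, Real.exp ((n : ℝ) * t * f x) ∂μ) ^ (-(((n : ℝ) - p) / n)))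
      ((∫ x, ((n : ℝ) - p) * f x *
            (|s x| ^ p - ((μ Set.univ).toReal)⁻¹ * ∫ y, |s y| ^ p ∂μ)
          - (n : ℝ) * p * h x * (s x * |s x| ^ (p - 2)) ∂μ) *
        ((μ Set.univ).toReal) ^ (-(((n : ℝ) - p) / n)))
      0 := by
  set M := (μ Set.univ).toReal
  have hM : 0 < M := ENNReal.toReal_pos hμ (measure_ne_top μ _)
  have hn' : (n : ℝ) ≠ 0 := by positivity
  have hB0 : ∫ x, exp ((n : ℝ) * 0 * f x) ∂μ = M := by simp [M, Measure.real]
  obtain ⟨hG, hA⟩ :=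
    hasDerivAt_integral_exp_mul_abs_sub_rpow (μ := μ) ((n : ℝ) - p) n hp hf hs hh hfb hsb hhb
  have hB := (hasDerivAt_integral_exp_mul (μ := μ) n hf hfb).rpow_const
    (p := -(((n : ℝ) - p) / n)) (.inl (hB0 ▸ hM.ne'))
  have hsplit : ∫ x, ((n : ℝ) - p) * f x * (|s x| ^ p - M⁻¹ * ∫ y, |s y| ^ p ∂μ)
        - (n : ℝ) * p * h x * (s x * |s x| ^ (p - 2)) ∂μ
      = (∫ x, ((n : ℝ) - p) * f x * |s x| ^ p - n * p * h x * (s x * |s x| ^ (p - 2)) ∂μ)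
        - ((n : ℝ) - p) * M⁻¹ * (∫ y, |s y| ^ p ∂μ) * ∫ x, f x ∂μ := by
    have hf_int : Integrable f μ := .of_bound hf.aestronglyMeasurable C (ae_of_all _ hfb)
    rw [← integral_const_mul (((n : ℝ) - p) * M⁻¹ * ∫ y, |s y| ^ p ∂μ),
      ← integral_sub hG (hf_int.const_mul _)]
    congr 1
    funext x
    ring
  refine (hA.fun_mul hB).congr_deriv ?_
  rw [hB0, hsplit, rpow_sub_one hM.ne']
  simp only [mul_zero, zero_mul, exp_zero, one_mul, sub_zero]
  field_simp
  ring
end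

section
/- Let (X, μ) be a finite measure space, p a real number with p > 1, and s, h : X → ℝ bounded measurable functions. If ∫_X h(x)·s(x)·|s(x)|^{p−2} dμ(x) = 0, then ∫_X |s(x) − h(x)|^p dμ(x) ≥ ∫_X |s(x)|^p dμ(x). -/
/-!
Since `p·s|s|^{p-2}` is the derivative of the convex function `|y|^p` at `y = s`, the tangent
line inequality gives `|s - h|^p ≥ |s|^p - p·h·s|s|^{p-2}` pointwise. Integrating, the last term
vanishes by hypothesis; boundedness makes all three integrands integrable.
-/

open MeasureTheory Real

lemma abs_mul_abs_rpow_sub_two {p : ℝ} (hp : p ≠ 1) (y : ℝ) :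
    |y * |y| ^ (p - 2)| = |y| ^ (p - 1) := by
  rw [abs_mul, abs_of_nonneg (rpow_nonneg (abs_nonneg y) _), ← rpow_one_add' (abs_nonneg y)]
  · ring_nf
  · contrapose! hp; linarith

lemma mul_abs_rpow_sub_two_mul_self {p : ℝ} (hp : p ≠ 0) (y : ℝ) :
    y * |y| ^ (p - 2) * y = |y| ^ p := by
  rw [mul_right_comm, ← abs_mul_self, abs_mul, ← sq, ← rpow_natCast, ← rpow_add' (abs_nonneg y)]
  · norm_num
  · norm_num [hp]

/-- The tangent line to `|·| ^ p` at `b` lies below its graph; proved by Young's inequality for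
the exponents `p` and `p / (p - 1)`. -/
lemma abs_rpow_add_mul_sub_le {p : ℝ} (hp : 1 < p) (a b : ℝ) :
    |b| ^ p + p * (b * |b| ^ (p - 2)) * (a - b) ≤ |a| ^ p := by
  have hpq := HolderConjugate.conjExponent hp
  have young := young_inequality_of_nonneg (abs_nonneg a) (rpow_nonneg (abs_nonneg b) (p - 1)) hpq
  rw [← rpow_mul (abs_nonneg b), hpq.sub_one_mul_conj] at young
  have hp0 : 0 < p := by linarith
  have young_p : p * (|a| * |b| ^ (p - 1)) ≤ |a| ^ p + (p - 1) * |b| ^ p := by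
    calc p * (|a| * |b| ^ (p - 1)) ≤ p * (|a| ^ p / p + |b| ^ p / conjExponent p) := by gcongr
      _ = |a| ^ p + (p - 1) * |b| ^ p := by rw [conjExponent]; field_simp
  have hta : b * |b| ^ (p - 2) * a ≤ |a| * |b| ^ (p - 1) := by
    rw [← abs_mul_abs_rpow_sub_two hp.ne' b, mul_comm |a|, ← abs_mul]
    exact le_abs_self _
  have htb := mul_abs_rpow_sub_two_mul_self hp0.ne' b
  linear_combination p * hta + young_p - p * htb

theorem Continuous.integrable_comp_of_isCompact {X E : Type*} [MeasurableSpace X]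
    {μ : Measure X} [IsFiniteMeasure μ] [TopologicalSpace E] [MeasurableSpace E]
    [OpensMeasurableSpace E] {F : E → ℝ} (hF : Continuous F) {K : Set E} (hK : IsCompact K)
    {f : X → E} (hf : Measurable f) (hfK : ∀ x, f x ∈ K) :
    Integrable (fun x => F (f x)) μ := by
  obtain ⟨C, hC⟩ := hK.exists_bound_of_continuousOn hF.continuousOn
  exact .of_bound (hF.measurable.comp hf).aestronglyMeasurable C (ae_of_all _ fun x => hC _ (hfK x))

/-- orthogonality implies minimization: if `∫ h·s·|s|^{p−2} dμ = 0`
then `∫ |s − h|^p dμ ≥ ∫ |s|^p dμ`. -/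
theorem stmt6 {X : Type*} [MeasurableSpace X] (μ : Measure X) [IsFiniteMeasure μ]
    (p : ℝ) (hp : 1 < p)
    (s h : X → ℝ) (hs : Measurable s) (hh : Measurable h)
    (C : ℝ) (hsb : ∀ x, |s x| ≤ C) (hhb : ∀ x, |h x| ≤ C)
    (hint : ∫ x, h x * (s x * |s x| ^ (p - 2)) ∂μ = 0) :
    ∫ x, |s x| ^ p ∂μ ≤ ∫ x, |s x - h x| ^ p ∂μ := by
  have hbox : ∀ x, (s x, h x) ∈ Metric.closedBall (0 : ℝ × ℝ) C := fun x => by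
    simpa [Prod.norm_def] using ⟨hsb x, hhb x⟩
  have integrable_of_continuous {F : ℝ × ℝ → ℝ} (hF : Continuous F) :
      Integrable (fun x => F (s x, h x)) μ :=
    hF.integrable_comp_of_isCompact (isCompact_closedBall 0 C) (hs.prodMk hh) hbox
  have int_s : Integrable (fun x => |s x| ^ p) μ :=
    integrable_of_continuous (F := fun z => |z.1| ^ p) (by fun_prop (disch := linarith))
  have int_sh : Integrable (fun x => |s x - h x| ^ p) μ :=
    integrable_of_continuous (F := fun z => |z.1 - z.2| ^ p) (by fun_prop (disch := linarith))
  have int_dual : Integrable (fun x => h x * (s x * |s x| ^ (p - 2))) μ := by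
    refine (integrable_of_continuous (F := fun z => z.2 * |z.1| ^ (p - 1)) ?_).congr'
      (by fun_prop) (ae_of_all _ fun x => ?_)
    · fun_prop (disch := linarith)
    · simp only [Real.norm_eq_abs, abs_mul (h x), abs_mul_abs_rpow_sub_two hp.ne',
        abs_of_nonneg (rpow_nonneg (abs_nonneg (s x)) (p - 1))]
  calc ∫ x, |s x| ^ p ∂μ = ∫ x, (|s x| ^ p - p * (h x * (s x * |s x| ^ (p - 2)))) ∂μ := by
        rw [integral_sub int_s (int_dual.const_mul p), integral_const_mul, hint, mul_zero,
          sub_zero]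
    _ ≤ ∫ x, |s x - h x| ^ p ∂μ :=
        integral_mono (int_s.sub (int_dual.const_mul p)) int_sh fun x => by
          linarith [abs_rpow_add_mul_sub_le hp (s x - h x) (s x)]
end
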